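/- arXiv:1802.01579 — 3 statements merged into one kernel-verified Lean document; each statement's English description precedes it below -/
import Mathlib

section
/- Let B be a unital associative ℂ-algebra, let A = B[ħ] (polynomial ring in a central variable ħ), and let t^i_j[n] ∈ A for i, j ∈ {0,…,N−1}, n ≥ 0, with t^i_j[n] = 0 for all but finitely many n. Define T^i_j(z) = δ^i_j + ħ·Σ_{n≥0} (−1)^n z^{−n−1} t^i_j[n] ∈ A[[z^{−1}]], with shifted series T^i_j(z + cħ) defined by binomial expansion of (z + cħ)^{−n−1} in A[[z^{−1}]]. Suppose the quantum determinant relation holds in A[[z^{−1}]]: Σ_{k_0,…,k_{N−1}} Alt(k_0,…,k_{N−1}) · T^{k_0}_0(z) · T^{k_1}_1(z + 2ħ) ⋯ T^{k_{N−1}}_{N−1}(z + 2(N−1)ħ) = 1, where Alt(k_0,…,k_{N−1}) is the sign of the permutation (k_0,…,k_{N−1}) of (0,…,N−1) and is 0 if the indices are not distinct. Then for every n ≥ 0, the trace Σ_{i=0}^{N−1} t^i_i[n] lies in the ideal ħ·A; that is, modulo ħ the operators t^i_j[n] are traceless and provide a basis of 𝔰𝔩_N[[z]]. -/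
/-!
Reduce modulo `ℏ²` by sending `ℏ` to the dual number `ε`. Every shifted series `T^i_j(z + cℏ)`
becomes `δ^i_j + ε·Σ_n (−1)^n z^{−n−1} t^i_j[n]`: the shift only enters with `ℏ²`. Over a ring
with a central square-zero element `ε`, the column-ordered determinant of a family `1 + ε·S r`
is `1 + ε·Σ_r (S r)_{rr}`, because every non-identity permutation picks at least two
off-diagonal factors, each divisible by `ε`. So the quantum determinant relation forces
`ε·Σ_i t^i_i[n] = 0` modulo `ℏ²`, i.e. the trace vanishes modulo `ℏ`.
-/

noncomputable section

variable {N : ℕ} {B : Type*} [Ring B] [Algebra ℂ B]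

/-- The shifted series `T^i_j(z + cℏ) ∈ A[[z⁻¹]]`, for `A = B[ℏ]` (so `ℏ = Polynomial.X`),
obtained from `T^i_j(z) = δ^i_j + ℏ·Σ_{n≥0} (−1)^n z^{−n−1} t^i_j[n]` by expanding each
`(z + cℏ)^{−n−1}` as the binomial series
`z^{−n−1} Σ_{m≥0} binom(−n−1, m) (cℏ)^m z^{−m}`, with `binom(−n−1, m) = (−1)^m binom(n+m, m)`.
The coefficient of `z^{−d}` (for `d ≥ 1`) is
`Σ_{m=0}^{d−1} (−1)^{d−1} binom(d−1, m) c^m ℏ^{m+1} t^i_j[d−1−m]`. -/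
def Tshift (t : Fin N → Fin N → ℕ → Polynomial B) (c : ℂ) (i j : Fin N) :
    PowerSeries (Polynomial B) :=
  PowerSeries.mk fun d =>
    if d = 0 then (if i = j then 1 else 0)
    else ∑ m ∈ Finset.range d,
      ((-1 : ℂ) ^ (d - 1) * (Nat.choose (d - 1) m : ℂ) * c ^ m) •
        (Polynomial.X ^ (m + 1) * t i j (d - 1 - m))

section SquareZero

variable {R : Type*} {ε : R}

theorem dvd_list_prod_of_mem [Monoid R] (hε : ∀ x, Commute ε x) {l : List R} {x : R} (hx : x ∈ l)
    (hεx : ε ∣ x) : ε ∣ l.prod := by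
  obtain ⟨l₁, l₂, rfl⟩ := List.append_of_mem hx
  obtain ⟨a, rfl⟩ := hεx
  exact ⟨l₁.prod * (a * l₂.prod), by
    rw [List.prod_append, List.prod_cons, mul_assoc, (hε _).symm.left_comm]⟩

theorem list_prod_ofFn_eq_zero [MonoidWithZero R] (hε : ∀ x, Commute ε x) (hεε : ε * ε = 0) {n : ℕ}
    {f : Fin n → R} {p q : Fin n} (hpq : p ≠ q) (hp : ε ∣ f p) (hq : ε ∣ f q) :
    (List.ofFn f).prod = 0 := by
  wlog hlt : p < q generalizing p q
  · exact this hpq.symm hq hp (hpq.symm.lt_of_le (not_lt.1 hlt))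
  induction n with
  | zero => exact p.elim0
  | succ n ih =>
    obtain ⟨q, rfl⟩ := Fin.exists_succ_eq.2 (Fin.pos_iff_ne_zero.1 (p.zero_le.trans_lt hlt))
    rw [List.ofFn_succ, List.prod_cons]
    cases p using Fin.cases with
    | zero =>
      obtain ⟨a, ha⟩ := hp
      obtain ⟨b, hb⟩ := dvd_list_prod_of_mem hε
        (List.mem_ofFn.2 ⟨q, rfl⟩ : f q.succ ∈ List.ofFn fun i => f i.succ) hq
      rw [ha, hb, mul_assoc, (hε a).symm.left_comm, ← mul_assoc, hεε, zero_mul]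
    | succ p =>
      rw [ih (Fin.succ_inj.not.1 hpq) hp hq (Fin.succ_lt_succ_iff.1 hlt), mul_zero]

theorem list_prod_map_one_add_mul [Semiring R] (hε : ∀ x, Commute ε x) (hεε : ε * ε = 0)
    (l : List R) :
    (l.map (1 + ε * ·)).prod = 1 + ε * l.sum := by
  induction l with
  | nil => simp
  | cons a l ih =>
    have hsq : ε * a * (ε * l.sum) = 0 := by
      rw [mul_assoc, (hε a).symm.left_comm, ← mul_assoc, hεε, zero_mul]
    rw [List.map_cons, List.prod_cons, ih, List.sum_cons, add_mul, one_mul, mul_add, mul_one,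
      hsq, mul_add]
    abel

end SquareZero

/-- Column-ordered determinant in which column `r` is read off the matrix `M r`; the quantum
determinant is `colDet` of `r ↦ T(z + 2rℏ)`. -/
def colDet {R : Type*} [Ring R] {n : ℕ} (M : Fin n → Matrix (Fin n) (Fin n) R) : R :=
  ∑ σ : Equiv.Perm (Fin n), (Equiv.Perm.sign σ : ℤ) • (List.ofFn fun r => M r (σ r) r).prod

theorem map_colDet {R R' : Type*} [Ring R] [Ring R'] (f : R →+* R') {n : ℕ}
    (M : Fin n → Matrix (Fin n) (Fin n) R) : f (colDet M) = colDet fun r => (M r).map f := by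
  simp only [colDet, map_sum, map_zsmul, map_list_prod, List.map_ofFn, Function.comp_def,
    Matrix.map_apply]

theorem colDet_one_add_smul {R : Type*} [Ring R] {ε : R} (hε : ∀ x, Commute ε x)
    (hεε : ε * ε = 0) {n : ℕ} (S : Fin n → Matrix (Fin n) (Fin n) R) :
    colDet (fun r => 1 + ε • S r) = 1 + ε * ∑ r, S r r r := by
  classical
  rw [colDet, Finset.sum_eq_single_of_mem 1 (Finset.mem_univ _)]
  · simpa [Matrix.one_apply, List.sum_ofFn, Function.comp_def] using
      list_prod_map_one_add_mul hε hεε (List.ofFn fun r => S r r r)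
  · intro σ _ hσ
    obtain ⟨p, hp⟩ : ∃ p, σ p ≠ p := not_forall.1 fun h => hσ (Equiv.ext h)
    have hdvd : ∀ r, σ r ≠ r → ε ∣ (1 + ε • S r) (σ r) r := fun r hr =>
      ⟨S r (σ r) r, by simp [hr]⟩
    rw [list_prod_ofFn_eq_zero (f := fun r => (1 + ε • S r) (σ r) r) hε hεε hp.symm (hdvd p hp)
      (hdvd _ (σ.injective.ne hp)), smul_zero]

open Polynomial TrivSqZeroExt DualNumber

namespace Polynomial

variable (S A : Type*) [CommSemiring S] [Semiring A] [Algebra S A]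

def toDualNumber : A[X] →ₐ[S] A[ε] :=
  eval₂AlgHom (inlAlgHom S A A) ε fun _ => commute_eps_right _

variable {S A}

@[simp]
theorem toDualNumber_X : toDualNumber S A X = ε := by
  simp [toDualNumber]

@[simp]
theorem fst_toDualNumber (p : A[X]) : (toDualNumber S A p).fst = p.coeff 0 := by
  induction p using Polynomial.induction_on' with
  | add p q hp hq => simp [hp, hq]
  | monomial n a => cases n <;> simp [toDualNumber, eval₂_monomial, coeff_monomial]

theorem X_dvd_of_eps_mul_toDualNumber_eq_zero {p : A[X]} (h : ε * toDualNumber S A p = 0) :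
    X ∣ p := by
  simpa [X_dvd_iff] using congrArg snd h

end Polynomial

namespace PowerSeries

variable {A : Type*} [Semiring A]

theorem commute_C_eps (x : PowerSeries A[ε]) : Commute (C ε) x := by
  ext n : 1
  rw [coeff_C_mul, coeff_mul_C, commute_eps_left]

theorem C_eps_mul_C_eps : (C ε * C ε : PowerSeries A[ε]) = 0 := by
  rw [← map_mul, eps_mul_eps, map_zero]

end PowerSeries

/-- The `ℏ`-coefficient `Σ_n (−1)^n z^{−n−1} t^i_j[n]` of `T^i_j(z)`, with `z⁻¹ = X`. -/
def linearPart (t : Fin N → Fin N → ℕ → B[X]) : Matrix (Fin N) (Fin N) (PowerSeries B[ε]) :=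
  Matrix.of fun i j =>
    PowerSeries.X * PowerSeries.mk fun n => (-1 : ℂ) ^ n • toDualNumber ℂ B (t i j n)

theorem map_Tshift (t : Fin N → Fin N → ℕ → B[X]) (c : ℂ) :
    (Matrix.of fun i j => Tshift t c i j).map
        (PowerSeries.map (toDualNumber ℂ B : B[X] →+* B[ε])) =
      1 + PowerSeries.C (ε : B[ε]) • linearPart t := by
  ext i j d : 2
  rcases d with _ | d
  · by_cases hij : i = j <;> simp [Tshift, linearPart, hij]
  · simp only [Tshift, Matrix.map_apply, Matrix.of_apply, PowerSeries.coeff_map,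
      PowerSeries.coeff_mk, Nat.add_eq_zero_iff, one_ne_zero, and_false, ↓reduceIte,
      add_tsub_cancel_right, map_sum, RingHom.coe_coe, map_smul, map_mul, map_pow,
      toDualNumber_X, linearPart, Matrix.smul_of, Matrix.add_apply, Matrix.one_apply,
      Pi.smul_apply, smul_eq_mul, map_add, apply_ite, PowerSeries.coeff_one, map_zero, ite_self,
      PowerSeries.coeff_C_mul, PowerSeries.coeff_succ_X_mul, Algebra.mul_smul_comm, zero_add]
    rw [Finset.sum_eq_single_of_mem 0 (by simp) fun m _ hm => by
      rw [pow_eq_zero_of_le (show 2 ≤ m + 1 by omega) eps_pow_two, zero_mul, smul_zero]]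
    simp

theorem qdet_implies_traceless_mod_hbar_general (N : ℕ)
    (B : Type*) [Ring B] [Algebra ℂ B]
    (t : Fin N → Fin N → ℕ → Polynomial B)
    (hqdet : (∑ σ : Equiv.Perm (Fin N),
        (Equiv.Perm.sign σ : ℤ) •
          (List.ofFn fun r : Fin N => Tshift t (2 * (r : ℕ) : ℂ) (σ r) r).prod) = 1) :
    ∀ n : ℕ, ∃ a : Polynomial B,
      (∑ i : Fin N, t i i n) = Polynomial.X * a := by
  intro n
  have hcolDet : colDet (fun r => Matrix.of fun i j => Tshift t (2 * (r : ℕ) : ℂ) i j) = 1 :=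
    hqdet
  have hmodSq : colDet (fun _ => 1 + PowerSeries.C (ε : B[ε]) • linearPart t) = 1 := by
    simpa only [map_colDet, map_one, map_Tshift] using
      congrArg (PowerSeries.map (toDualNumber ℂ B : B[X] →+* B[ε])) hcolDet
  rw [colDet_one_add_smul PowerSeries.commute_C_eps PowerSeries.C_eps_mul_C_eps,
    add_eq_left] at hmodSq
  have hcoeff := congrArg (PowerSeries.coeff (n + 1)) hmodSq
  simp only [linearPart, PowerSeries.coeff_C_mul, map_sum, Matrix.of_apply,
    PowerSeries.coeff_succ_X_mul, PowerSeries.coeff_mk, ← Finset.smul_sum, mul_smul_comm,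
    ← Finset.mul_sum, map_zero] at hcoeff
  rw [(isUnit_neg_one.pow n).smul_eq_zero, ← map_sum] at hcoeff
  exact X_dvd_of_eps_mul_toDualNumber_eq_zero hcoeff

/-- If the quantum determinant relation
`Σ Alt(k_0,…,k_{N−1}) T^{k_0}_0(z) T^{k_1}_1(z + 2ℏ) ⋯ T^{k_{N−1}}_{N−1}(z + 2(N−1)ℏ) = 1`
holds (the sum over permutations with their signs, the shifts coming from the framing
anomaly), then modulo `ℏ` the operators `t^i_j[n]` are traceless:
`Σ_i t^i_i[n] ∈ ℏ·A`, so they provide a basis of `𝔰𝔩_N[[z]]`. -/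
theorem qdet_implies_traceless_mod_hbar (N : ℕ) (hN : 2 ≤ N)
    (B : Type*) [Ring B] [Algebra ℂ B]
    (t : Fin N → Fin N → ℕ → Polynomial B)
    (hfin : ∀ i j : Fin N, ∃ M : ℕ, ∀ n : ℕ, M ≤ n → t i j n = 0)
    (hqdet : (∑ σ : Equiv.Perm (Fin N),
        (Equiv.Perm.sign σ : ℤ) •
          (List.ofFn fun r : Fin N => Tshift t (2 * (r : ℕ) : ℂ) (σ r) r).prod) = 1) :
    ∀ n : ℕ, ∃ a : Polynomial B,
      (∑ i : Fin N, t i i n) = Polynomial.X * a :=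
  qdet_implies_traceless_mod_hbar_general N B t hqdet
end
end

section
/- Rigidity of the quasiclassical rational r-matrix: let N ≥ 2 and n ≥ 2 be integers, let c = P − (1/N)·Id be the 𝔰𝔩_N Casimir operator on ℂ^N ⊗ ℂ^N (P the flip operator), and let λ ∈ ℂ. Suppose that for all pairwise distinct complex numbers z₁, z₂, z₃ (writing z_{ab} = z_a − z_b), λ·( [c₁₂, c₁₃]·( z₁₂^{−1} z₁₃^{−n} + z₁₂^{−n} z₁₃^{−1} ) + [c₁₃, c₂₃]·( z₁₃^{−1} z₂₃^{−n} + z₁₃^{−n} z₂₃^{−1} ) + [c₁₂, c₂₃]·( z₁₂^{−1} z₂₃^{−n} + z₁₂^{−n} z₂₃^{−1} ) ) = 0 as an operator on (ℂ^N)^⊗3 — equivalently, r(z) = c/z + ελ c/z^n satisfies the classical Yang–Baxter equation modulo ε². Then λ = 0; in particular, the solution c/z of the classical Yang–Baxter equation admits no first-order deformation by a term λ c z^{−n} with a higher-order pole. -/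
noncomputable section

/-- The flip operator `P` on `ℂ^N ⊗ ℂ^N`, as a matrix in the standard basis. -/
def flipP (N : ℕ) : Matrix (Fin N × Fin N) (Fin N × Fin N) ℂ :=
  fun p q => if p.1 = q.2 ∧ p.2 = q.1 then 1 else 0

/-- The `𝔰𝔩_N` Casimir operator `c = P − (1/N)·Id` on `ℂ^N ⊗ ℂ^N`. -/
def slCasimir (N : ℕ) : Matrix (Fin N × Fin N) (Fin N × Fin N) ℂ :=
  flipP N - ((1 : ℂ) / N) • 1

/-- `X_{12}`: `X` acting on the first and second tensor factors of `(ℂ^N)^⊗3`. -/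
def emb12 (N : ℕ) (X : Matrix (Fin N × Fin N) (Fin N × Fin N) ℂ) :
    Matrix (Fin N × Fin N × Fin N) (Fin N × Fin N × Fin N) ℂ :=
  fun p q => X (p.1, p.2.1) (q.1, q.2.1) * (if p.2.2 = q.2.2 then 1 else 0)

/-- `X_{13}`: `X` acting on the first and third tensor factors of `(ℂ^N)^⊗3`. -/
def emb13 (N : ℕ) (X : Matrix (Fin N × Fin N) (Fin N × Fin N) ℂ) :
    Matrix (Fin N × Fin N × Fin N) (Fin N × Fin N × Fin N) ℂ :=
  fun p q => X (p.1, p.2.2) (q.1, q.2.2) * (if p.2.1 = q.2.1 then 1 else 0)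

/-- `X_{23}`: `X` acting on the second and third tensor factors of `(ℂ^N)^⊗3`. -/
def emb23 (N : ℕ) (X : Matrix (Fin N × Fin N) (Fin N × Fin N) ℂ) :
    Matrix (Fin N × Fin N × Fin N) (Fin N × Fin N × Fin N) ℂ :=
  fun p q => X (p.2.1, p.2.2) (q.2.1, q.2.2) * (if p.1 = q.1 then 1 else 0)

/-- Rigidity of the quasiclassical rational r-matrix: if
`λ·([c₁₂,c₁₃](z₁₂⁻¹z₁₃⁻ⁿ + z₁₂⁻ⁿz₁₃⁻¹) + [c₁₃,c₂₃](z₁₃⁻¹z₂₃⁻ⁿ + z₁₃⁻ⁿz₂₃⁻¹)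
 + [c₁₂,c₂₃](z₁₂⁻¹z₂₃⁻ⁿ + z₁₂⁻ⁿz₂₃⁻¹)) = 0` for all pairwise distinct `z₁ z₂ z₃`
(equivalently, `r(z) = c/z + ελc/zⁿ` satisfies the classical Yang–Baxter equation modulo
`ε²`), then `λ = 0`: the solution `c/z` of the CYBE admits no first-order deformation by a
term `λ c z^{−n}` with a higher-order pole. -/
theorem rational_r_matrix_rigidity (N n : ℕ) (hN : 2 ≤ N) (hn : 2 ≤ n) (lam : ℂ)
    (H : ∀ z₁ z₂ z₃ : ℂ, z₁ ≠ z₂ → z₁ ≠ z₃ → z₂ ≠ z₃ →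
      lam • (((z₁ - z₂)⁻¹ * ((z₁ - z₃) ^ n)⁻¹ + ((z₁ - z₂) ^ n)⁻¹ * (z₁ - z₃)⁻¹) •
            (emb12 N (slCasimir N) * emb13 N (slCasimir N) -
              emb13 N (slCasimir N) * emb12 N (slCasimir N)) +
          ((z₁ - z₃)⁻¹ * ((z₂ - z₃) ^ n)⁻¹ + ((z₁ - z₃) ^ n)⁻¹ * (z₂ - z₃)⁻¹) •
            (emb13 N (slCasimir N) * emb23 N (slCasimir N) -
              emb23 N (slCasimir N) * emb13 N (slCasimir N)) +
          ((z₁ - z₂)⁻¹ * ((z₂ - z₃) ^ n)⁻¹ + ((z₁ - z₂) ^ n)⁻¹ * (z₂ - z₃)⁻¹) •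
            (emb12 N (slCasimir N) * emb23 N (slCasimir N) -
              emb23 N (slCasimir N) * emb12 N (slCasimir N))) = 0) :
    lam = 0 := by
  have h01 : (⟨0, by omega⟩ : Fin N) ≠ ⟨1, by omega⟩ := by simp
  set pp : Fin N × Fin N × Fin N := (⟨0, by omega⟩, ⟨1, by omega⟩, ⟨0, by omega⟩) with hpp
  set qq : Fin N × Fin N × Fin N := (⟨0, by omega⟩, ⟨0, by omega⟩, ⟨1, by omega⟩) with hqq
  have e1 : (emb12 N (slCasimir N) * emb13 N (slCasimir N)) pp qq = 1 := by
    rw [Matrix.mul_apply]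
    simp [hpp, hqq, emb12, emb13, emb23, slCasimir, flipP, Matrix.sub_apply,
      Matrix.smul_apply, Matrix.one_apply, Fintype.sum_prod_type, Prod.ext_iff, h01, h01.symm]
  have e2 : (emb13 N (slCasimir N) * emb12 N (slCasimir N)) pp qq = 0 := by
    rw [Matrix.mul_apply]
    simp [hpp, hqq, emb12, emb13, emb23, slCasimir, flipP, Matrix.sub_apply,
      Matrix.smul_apply, Matrix.one_apply, Fintype.sum_prod_type, Prod.ext_iff, h01, h01.symm]
  have e3 : (emb13 N (slCasimir N) * emb23 N (slCasimir N)) pp qq = 1 - 1/N := by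
    rw [Matrix.mul_apply]
    simp [hpp, hqq, emb12, emb13, emb23, slCasimir, flipP, Matrix.sub_apply,
      Matrix.smul_apply, Matrix.one_apply, Fintype.sum_prod_type, Prod.ext_iff, h01, h01.symm]
  have e4 : (emb23 N (slCasimir N) * emb13 N (slCasimir N)) pp qq = -(1/N) := by
    rw [Matrix.mul_apply]
    simp [hpp, hqq, emb12, emb13, emb23, slCasimir, flipP, Matrix.sub_apply,
      Matrix.smul_apply, Matrix.one_apply, Fintype.sum_prod_type, Prod.ext_iff, h01, h01.symm]
  have e5 : (emb12 N (slCasimir N) * emb23 N (slCasimir N)) pp qq = -(1/N) := by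
    rw [Matrix.mul_apply]
    simp [hpp, hqq, emb12, emb13, emb23, slCasimir, flipP, Matrix.sub_apply,
      Matrix.smul_apply, Matrix.one_apply, Fintype.sum_prod_type, Prod.ext_iff, h01, h01.symm]
  have e6 : (emb23 N (slCasimir N) * emb12 N (slCasimir N)) pp qq = 1 - 1/N := by
    rw [Matrix.mul_apply]
    simp [hpp, hqq, emb12, emb13, emb23, slCasimir, flipP, Matrix.sub_apply,
      Matrix.smul_apply, Matrix.one_apply, Fintype.sum_prod_type, Prod.ext_iff, h01, h01.symm]
  have key := H 2 1 0 (by norm_num) (by norm_num) (by norm_num)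
  have e := congrFun (congrFun key pp) qq
  simp only [Matrix.smul_apply, Matrix.add_apply, Matrix.sub_apply, Matrix.zero_apply,
    e1, e2, e3, e4, e5, e6, smul_eq_mul] at e
  norm_num at e
  -- e should now be an equation lam * (...) = 0
  have h2n : ((2:ℂ))^n ≠ 2 := by
    have hcast : ((2:ℂ))^n = ((2^n : ℕ) : ℂ) := by push_cast; ring
    rw [hcast]
    intro h
    have h' : (2^n : ℕ) = 2 := by exact_mod_cast h
    have : 2^n ≥ 2^2 := Nat.pow_le_pow_right (by norm_num) hn
    omega
  have hne : (2:ℂ)^n ≠ 0 := pow_ne_zero n two_ne_zero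
  rcases e with e | e
  · exact e
  · exfalso
    have h2 : (2:ℂ) * ((2:ℂ)^n)⁻¹ = 1 := by linear_combination e
    have h3 : (2:ℂ) * (((2:ℂ)^n)⁻¹ * (2:ℂ)^n) = 1 * (2:ℂ)^n := by
      rw [← mul_assoc, h2]
    rw [inv_mul_cancel₀ hne, one_mul, mul_one] at h3
    exact h2n h3.symm
end
end

section
/- For a sequence c = (c₀, c₁, c₂, …) of complex numbers, define the formal power series F_c(x) = Σ_{k≥0} k!·( Σ_{n+m=k, n,m≥0} (−1)^n c_n c_m )·x^{k+1} ∈ ℂ[[x]]. Then: (i) for every odd k, the coefficient Σ_{n+m=k} (−1)^n c_n c_m vanishes, so F_c is supported in odd degrees (F_c is an odd formal series with zero constant term); and (ii) conversely, for every formal power series g ∈ ℂ[[x]] all of whose nonzero coefficients are in odd degrees, there exists a sequence c with F_c = g. -/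
/-! With `C(x) = Σ cₙ xⁿ`, the inner sum `Σ_{n+m=k} (−1)ⁿ cₙ cₘ` is the coefficient of `x^k` in
`C(−x) C(x)`, a series that is invariant under `x ↦ −x`; hence its odd coefficients vanish.
Conversely, a nonzero even series `H` is `x^{2m} U` with `U` even and `U(0) ≠ 0`. By Hensel's
lemma in `ℂ⟦x⟧`, `(−1)^m U = A²`, and `A` is again even because `A(−x) = ±A(x)` and the constant
terms agree; then `C = x^m A` satisfies `C(−x) C(x) = H`. The factorials in `F_c` are harmless:
they are undone by dividing the coefficients of the target series. -/

noncomputable section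

/-- The formal power series `F_c(x) = Σ_{k≥0} k!·(Σ_{n+m=k} (−1)^n c_n c_m)·x^{k+1}`
associated to a sequence `c` of complex numbers: the exponent of the free `𝔤𝔩₁` R-matrix. -/
def freeExponent (c : ℕ → ℂ) : PowerSeries ℂ :=
  PowerSeries.mk fun d =>
    if d = 0 then 0
    else (Nat.factorial (d - 1) : ℂ) *
      ∑ n ∈ Finset.range d, (-1 : ℂ) ^ n * c n * c (d - 1 - n)

open PowerSeries Finset
open scoped Nat

namespace PowerSeries

section CommRing

variable {R : Type*} [CommRing R]

theorem coeff_rescale_neg_one_mk_mul_mk (c : ℕ → R) (k : ℕ) :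
    coeff k (rescale (-1) (mk c) * mk c) =
      ∑ n ∈ range (k + 1), (-1) ^ n * c n * c (k - n) := by
  rw [coeff_mul, Nat.sum_antidiagonal_eq_sum_range_succ
    (fun i j => coeff i (rescale (-1) (mk c)) * coeff j (mk c))]
  simp only [coeff_rescale, coeff_mk]

theorem rescale_neg_one_involutive : Function.Involutive (rescale (-1 : R)) := fun f => by
  rw [rescale_rescale, neg_one_mul, neg_neg, rescale_one, RingHom.id_apply]

theorem rescale_neg_one_rescale_neg_one_mul_self (f : R⟦X⟧) :
    rescale (-1) (rescale (-1) f * f) = rescale (-1) f * f := by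
  rw [map_mul, rescale_neg_one_involutive, mul_comm]

theorem exists_sq_eq_of_constantCoeff_eq_sq {f : R⟦X⟧} {w : R}
    (hf : constantCoeff f = w ^ 2) (hw : IsUnit (2 * w)) : ∃ a : R⟦X⟧, a ^ 2 = f := by
  have hroot : (Polynomial.X ^ 2 - Polynomial.C f).eval (C w) ∈ Ideal.span {X} := by
    rw [Ideal.mem_span_singleton, X_dvd_iff]
    simp [hf]
  have hsimple : IsUnit (Ideal.Quotient.mk (Ideal.span {X})
      ((Polynomial.X ^ 2 - Polynomial.C f).derivative.eval (C w))) := by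
    have hderiv : (Polynomial.X ^ 2 - Polynomial.C f).derivative.eval (C w) = C (2 * w) := by
      rw [map_mul, map_ofNat, Polynomial.derivative_sub, Polynomial.derivative_X_sq,
        Polynomial.derivative_C, sub_zero, Polynomial.eval_mul, Polynomial.eval_C,
        Polynomial.eval_X]
    rw [hderiv]
    exact (hw.map C).map _
  obtain ⟨a, ha, -⟩ := HenselianRing.is_henselian (Polynomial.X ^ 2 - Polynomial.C f)
    (Polynomial.monic_X_pow_sub_C f two_ne_zero) (C w) hroot hsimple
  exact ⟨a, by simpa [sub_eq_zero] using ha⟩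

end CommRing

section CharZero

variable {R : Type*} [CommRing R] [NoZeroDivisors R] [CharZero R]

theorem coeff_eq_zero_of_rescale_neg_one_eq_self {f : R⟦X⟧} (hf : rescale (-1) f = f) {k : ℕ}
    (hk : Odd k) : coeff k f = 0 := by
  have := congrArg (coeff k) hf
  rwa [coeff_rescale, hk.neg_one_pow, neg_one_mul, CharZero.neg_eq_self_iff] at this

theorem rescale_neg_one_eq_self_of_sq {f : R⟦X⟧} (hf : rescale (-1) (f ^ 2) = f ^ 2)
    (h0 : constantCoeff f ≠ 0) : rescale (-1) f = f := by
  rw [map_pow, sq_eq_sq_iff_eq_or_eq_neg] at hf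
  refine hf.resolve_right fun h => h0 ?_
  have := congrArg (coeff 0) h
  rwa [coeff_rescale, pow_zero, one_mul, map_neg, CharZero.eq_neg_self_iff,
    coeff_zero_eq_constantCoeff_apply] at this

end CharZero

section IsAlgClosed

variable {K : Type*} [Field K] [IsAlgClosed K] [CharZero K]

theorem exists_sq_eq_of_rescale_neg_one_eq_self {u : K⟦X⟧} (hu : rescale (-1) u = u)
    (hu0 : constantCoeff u ≠ 0) : ∃ a : K⟦X⟧, rescale (-1) a = a ∧ a ^ 2 = u := by
  obtain ⟨w, hw⟩ := IsAlgClosed.exists_pow_nat_eq (constantCoeff u) two_pos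
  have hw0 : w ≠ 0 := by
    rintro rfl
    exact hu0 (by simpa using hw.symm)
  obtain ⟨a, ha⟩ := exists_sq_eq_of_constantCoeff_eq_sq hw.symm (by simpa using hw0)
  refine ⟨a, rescale_neg_one_eq_self_of_sq (by rw [ha, hu]) fun ha0 => hu0 ?_, ha⟩
  simp [← ha, ha0]

theorem exists_rescale_neg_one_mul_self_eq {h : K⟦X⟧} (hh : rescale (-1) h = h) :
    ∃ f : K⟦X⟧, rescale (-1) f * f = h := by
  rcases eq_or_ne h 0 with rfl | h0
  · exact ⟨0, by simp⟩
  obtain ⟨m, hm⟩ : Even h.order.toNat := by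
    by_contra hodd
    exact coeff_order h0
      (coeff_eq_zero_of_rescale_neg_one_eq_self hh (Nat.not_even_iff_odd.mp hodd))
  set u := divXPowOrder h
  have hu : X ^ (m + m) * u = h := hm ▸ X_pow_order_mul_divXPowOrder
  have hu_even : rescale (-1) u = u := by
    refine mul_left_cancel₀ (pow_ne_zero (m + m) X_ne_zero) ?_
    have := congrArg (rescale (-1)) hu
    rwa [hh, map_mul, map_pow, rescale_neg_one_X, Even.neg_pow ⟨m, rfl⟩, ← hu] at this
  have hsign : ((-1 : K⟦X⟧) ^ m) * (-1) ^ m = 1 := by rw [← mul_pow]; norm_num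
  obtain ⟨a, ha_even, ha⟩ := exists_sq_eq_of_rescale_neg_one_eq_self (u := (-1) ^ m * u)
    (by rw [map_mul, hu_even, map_pow, map_neg, map_one])
    (by simpa [constantCoeff_divXPowOrder_eq_zero_iff, u] using h0)
  refine ⟨X ^ m * a, ?_⟩
  rw [map_mul, map_pow, rescale_neg_one_X, ha_even, ← hu]
  linear_combination (-1) ^ m * X ^ (m + m) * ha + X ^ (m + m) * u * hsign

end IsAlgClosed

end PowerSeries

theorem sum_range_neg_one_pow_mul_mul_sub_eq_zero_of_odd {R : Type*} [CommRing R]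
    [NoZeroDivisors R] [CharZero R] (c : ℕ → R) {k : ℕ} (hk : Odd k) :
    ∑ n ∈ range (k + 1), (-1) ^ n * c n * c (k - n) = 0 := by
  rw [← coeff_rescale_neg_one_mk_mul_mk]
  exact coeff_eq_zero_of_rescale_neg_one_eq_self (rescale_neg_one_rescale_neg_one_mul_self _) hk

theorem coeff_zero_freeExponent (c : ℕ → ℂ) : coeff 0 (freeExponent c) = 0 := by
  simp [freeExponent]

theorem coeff_succ_freeExponent (c : ℕ → ℂ) (d : ℕ) :
    coeff (d + 1) (freeExponent c) = d ! * coeff d (rescale (-1) (mk c) * mk c) := by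
  simp [freeExponent, coeff_rescale_neg_one_mk_mul_mk]

theorem coeff_freeExponent_of_even (c : ℕ → ℂ) : ∀ {d : ℕ}, Even d → coeff d (freeExponent c) = 0
  | 0, _ => coeff_zero_freeExponent c
  | k + 1, hd => by
    rw [coeff_succ_freeExponent, coeff_rescale_neg_one_mk_mul_mk,
      sum_range_neg_one_pow_mul_mul_sub_eq_zero_of_odd c
        (Nat.not_even_iff_odd.mp (Nat.even_add_one.mp hd)), mul_zero]

theorem exists_freeExponent_eq {g : ℂ⟦X⟧} (hg : ∀ d, Even d → coeff d g = 0) :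
    ∃ c : ℕ → ℂ, freeExponent c = g := by
  set h : ℂ⟦X⟧ := mk fun d => coeff (d + 1) g / (d ! : ℂ)
  have hh : rescale (-1) h = h := by
    ext d
    rcases Nat.even_or_odd d with hd | hd
    · simp [h, hd.neg_one_pow]
    · simp [h, hg _ hd.add_one]
  obtain ⟨f, hf⟩ := exists_rescale_neg_one_mul_self_eq hh
  have hmk : mk (fun n => coeff n f) = f := ext fun n => coeff_mk _ _
  refine ⟨fun n => coeff n f, ext fun d => ?_⟩
  rcases d with _ | d
  · rw [coeff_zero_freeExponent, hg 0 .zero]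
  · rw [coeff_succ_freeExponent, hmk, hf, coeff_mk]
    exact mul_div_cancel₀ _ (Nat.cast_ne_zero.mpr d.factorial_ne_zero)

/-- (i) For every odd `k` the coefficient `Σ_{n+m=k} (−1)^n c_n c_m` vanishes, so `F_c` is an
odd formal series (supported in odd degrees, with zero constant term); and (ii) conversely,
every formal power series all of whose nonzero coefficients are in odd degrees arises as
`F_c` for some sequence `c`. -/
theorem freeExponent_odd_and_surjective :
    (∀ (c : ℕ → ℂ) (k : ℕ), Odd k →
        (∑ n ∈ Finset.range (k + 1), (-1 : ℂ) ^ n * c n * c (k - n)) = 0) ∧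
      (∀ (c : ℕ → ℂ) (d : ℕ), Even d → PowerSeries.coeff d (freeExponent c) = 0) ∧
      (∀ g : PowerSeries ℂ, (∀ d : ℕ, Even d → PowerSeries.coeff d g = 0) →
        ∃ c : ℕ → ℂ, freeExponent c = g) :=
  ⟨fun c _ hk => sum_range_neg_one_pow_mul_mul_sub_eq_zero_of_odd c hk,
    fun c _ hd => coeff_freeExponent_of_even c hd, fun _ hg => exists_freeExponent_eq hg⟩
end
end
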